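/- arXiv:2503.09854 — 2 statements merged into one kernel-verified Lean document; each statement's English description precedes it below -/
import Mathlib

section
/- Let f(x) = (1/2)xᵀQx + qᵀx + c with Q symmetric positive semidefinite, γ ≥ 0, G = (I+γQ)^{-1}, and consider ẋ = −αQ(x+γu) − αq + αu with output y = x + γu, α > 0. Then with storage function S(x) = (1/(2α))(x−x̄)ᵀG(x−x̄), for any equilibrium (x̄,ū), the derivative along trajectories satisfies exactly Ṡ = ỹᵀũ − ỹᵀ(GQ)ỹ − γũᵀGũ, where ỹ = y−ȳ, ũ = u−ū. Hence the system is input-strictly and output-strictly equilibrium-independent passive with indices ν = λ_min(γG) and ρ = λ_min(GQ). -/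
/-!
With `G = (1 + γQ)⁻¹`, the equilibrium equation turns the drift into `α(ũ - Qỹ)`, and
`x - x̄ = ỹ - γũ`. Expanding `(ỹ - γũ)ᵀG(ũ - Qỹ)`, the two cross terms combine, by symmetry of
`G`, into `ũᵀG(1 + γQ)ỹ = ỹᵀũ`, which is the exact dissipation identity. Since `Q` commutes
with `1 + γQ`, it commutes with `G`, so `GQ` is symmetric; the inequality then follows from the
Rayleigh bound `λ_min(M)‖v‖² ≤ vᵀMv` for the symmetric matrices `GQ` and `γG`.
-/

open Matrix
open scoped MatrixOrder

/-- Smallest eigenvalue of a real matrix, as the infimum of its real spectrum. -/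
noncomputable def lamMin {n : ℕ} (M : Matrix (Fin n) (Fin n) ℝ) : ℝ :=
  sInf (spectrum ℝ M)

theorem lamMin_mul_dotProduct_self_le {n : ℕ} {M : Matrix (Fin n) (Fin n) ℝ}
    (hM : M.IsHermitian) (v : Fin n → ℝ) : lamMin M * (v ⬝ᵥ v) ≤ v ⬝ᵥ M *ᵥ v := by
  have hle : algebraMap ℝ _ (lamMin M) ≤ M :=
    (algebraMap_le_iff_le_spectrum hM.isSelfAdjoint).2 fun _ hx =>
      csInf_le (finite_spectrum M).bddBelow hx
  have hpsd := (le_iff.1 hle).dotProduct_mulVec_nonneg v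
  rw [Algebra.algebraMap_eq_smul_one, sub_mulVec, dotProduct_sub, smul_mulVec, one_mulVec,
    dotProduct_smul, smul_eq_mul, star_trivial] at hpsd
  linarith

section
variable {ι R : Type*} [Fintype ι] [DecidableEq ι] [CommRing R]

theorem commute_inv_one_add_smul (Q : Matrix ι ι R) (γ : R) : Commute Q (1 + γ • Q)⁻¹ := by
  have hQA : Commute Q (1 + γ • Q) :=
    (Commute.one_right Q).add_right ((Commute.refl Q).smul_right γ)
  by_cases hA : IsUnit (1 + γ • Q)
  · obtain ⟨A, hA⟩ := hA
    rw [← hA] at hQA ⊢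
    rw [← coe_units_inv]
    exact hQA.units_inv_right
  · rw [nonsing_inv_apply_not_isUnit _ (mt (isUnit_iff_isUnit_det _).2 hA)]
    exact Commute.zero_right Q

theorem sub_smul_dotProduct_mulVec_sub_mulVec {G Q : Matrix ι ι R} {γ : R} (hG : G.IsSymm)
    (hGQ : G * (1 + γ • Q) = 1) (y u : ι → R) :
    (y - γ • u) ⬝ᵥ G *ᵥ (u - Q *ᵥ y) =
      y ⬝ᵥ u - y ⬝ᵥ (G * Q) *ᵥ y - γ * (u ⬝ᵥ G *ᵥ u) := by
  have hcross : y ⬝ᵥ G *ᵥ u + γ * (u ⬝ᵥ (G * Q) *ᵥ y) = y ⬝ᵥ u :=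
    calc y ⬝ᵥ G *ᵥ u + γ * (u ⬝ᵥ (G * Q) *ᵥ y)
      _ = u ⬝ᵥ (G * (1 + γ • Q)) *ᵥ y := by
          rw [dotProduct_mulVec y, ← mulVec_transpose, hG.eq, dotProduct_comm, mul_add, mul_one,
            mul_smul_comm, add_mulVec, smul_mulVec, dotProduct_add, dotProduct_smul, smul_eq_mul]
      _ = y ⬝ᵥ u := by rw [hGQ, one_mulVec, dotProduct_comm]
  simp only [sub_dotProduct, mulVec_sub, dotProduct_sub, smul_dotProduct, smul_eq_mul,
    mulVec_mulVec]
  linear_combination hcross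
end

theorem stmt_7_general {n : ℕ} (Q : Matrix (Fin n) (Fin n) ℝ) (q : Fin n → ℝ)
    (γ α : ℝ) (hQ : Q.PosSemidef) (hγ : 0 ≤ γ) (hα : 0 < α)
    (x u xbar ubar : Fin n → ℝ)
    (heq : (0 : Fin n → ℝ) = -(Q.mulVec (xbar + γ • ubar)) - q + ubar) :
    (1 / α) * ((x - xbar) ⬝ᵥ
        ((1 + γ • Q)⁻¹).mulVec (-(α • Q.mulVec (x + γ • u)) - α • q + α • u)) =
      ((x + γ • u) - (xbar + γ • ubar)) ⬝ᵥ (u - ubar)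
        - ((x + γ • u) - (xbar + γ • ubar)) ⬝ᵥ
            (((1 + γ • Q)⁻¹ * Q).mulVec ((x + γ • u) - (xbar + γ • ubar)))
        - γ * ((u - ubar) ⬝ᵥ ((1 + γ • Q)⁻¹).mulVec (u - ubar)) ∧
    (1 / α) * ((x - xbar) ⬝ᵥ
        ((1 + γ • Q)⁻¹).mulVec (-(α • Q.mulVec (x + γ • u)) - α • q + α • u)) ≤
      ((x + γ • u) - (xbar + γ • ubar)) ⬝ᵥ (u - ubar)
        - lamMin ((1 + γ • Q)⁻¹ * Q) *
            (((x + γ • u) - (xbar + γ • ubar)) ⬝ᵥ ((x + γ • u) - (xbar + γ • ubar)))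
        - lamMin (γ • (1 + γ • Q)⁻¹) * ((u - ubar) ⬝ᵥ (u - ubar)) := by
  set G := (1 + γ • Q)⁻¹
  set ytil := (x + γ • u) - (xbar + γ • ubar)
  set util := u - ubar
  have hA : (1 + γ • Q).PosDef := PosDef.one.add_posSemidef (hQ.smul hγ)
  have hGA : G * (1 + γ • Q) = 1 :=
    nonsing_inv_mul _ ((isUnit_iff_isUnit_det _).1 hA.isUnit)
  have hG : G.IsHermitian := hA.isHermitian.inv
  have hGQ : (G * Q).IsHermitian :=
    (hG.commute_iff hQ.isHermitian).1 (commute_inv_one_add_smul Q γ).symm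
  have hdrift : -(α • Q *ᵥ (x + γ • u)) - α • q + α • u = α • (util - Q *ᵥ ytil) := by
    rw [mulVec_sub]
    linear_combination (norm := module) α • heq.symm
  have hx : x - xbar = ytil - γ • util := by module
  have hrate : (1 / α) * ((x - xbar) ⬝ᵥ G *ᵥ (-(α • Q *ᵥ (x + γ • u)) - α • q + α • u)) =
      ytil ⬝ᵥ util - ytil ⬝ᵥ (G * Q) *ᵥ ytil - γ * (util ⬝ᵥ G *ᵥ util) := by
    rw [hdrift, hx, mulVec_smul, dotProduct_smul, smul_eq_mul, one_div,
      inv_mul_cancel_left₀ hα.ne']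
    exact sub_smul_dotProduct_mulVec_sub_mulVec (isHermitian_iff_isSymm.1 hG) hGA ytil util
  refine ⟨hrate, hrate ▸ ?_⟩
  have hy := lamMin_mul_dotProduct_self_le hGQ ytil
  have hu := lamMin_mul_dotProduct_self_le (hG.smul (IsSelfAdjoint.all γ)) util
  rw [smul_mulVec, dotProduct_smul, smul_eq_mul] at hu
  linarith

/-- For the quadratic objective `f(x) = ½xᵀQx + qᵀx + c` and agent
`ẋ = -αQ(x+γu) - αq + αu`, `y = x + γu`, the storage
`S(x) = (1/(2α))(x-x̄)ᵀG(x-x̄)` with `G = (I+γQ)⁻¹` satisfies exactly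
`Ṡ = ỹᵀũ - ỹᵀGQỹ - γũᵀGũ`; hence input/output-strict equilibrium-independent
passivity with indices `ν = λ_min(γG)` and `ρ = λ_min(GQ)`. -/
theorem stmt_7 {n : ℕ} (Q : Matrix (Fin n) (Fin n) ℝ) (q : Fin n → ℝ) (c : ℝ)
    (γ α : ℝ) (hQ : Q.PosSemidef) (hγ : 0 ≤ γ) (hα : 0 < α)
    (x u xbar ubar : Fin n → ℝ)
    (heq : (0 : Fin n → ℝ) = -(Q.mulVec (xbar + γ • ubar)) - q + ubar) :
    (1 / α) * ((x - xbar) ⬝ᵥ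
        ((1 + γ • Q)⁻¹).mulVec (-(α • Q.mulVec (x + γ • u)) - α • q + α • u)) =
      ((x + γ • u) - (xbar + γ • ubar)) ⬝ᵥ (u - ubar)
        - ((x + γ • u) - (xbar + γ • ubar)) ⬝ᵥ
            (((1 + γ • Q)⁻¹ * Q).mulVec ((x + γ • u) - (xbar + γ • ubar)))
        - γ * ((u - ubar) ⬝ᵥ ((1 + γ • Q)⁻¹).mulVec (u - ubar)) ∧
    (1 / α) * ((x - xbar) ⬝ᵥ
        ((1 + γ • Q)⁻¹).mulVec (-(α • Q.mulVec (x + γ • u)) - α • q + α • u)) ≤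
      ((x + γ • u) - (xbar + γ • ubar)) ⬝ᵥ (u - ubar)
        - lamMin ((1 + γ • Q)⁻¹ * Q) *
            (((x + γ • u) - (xbar + γ • ubar)) ⬝ᵥ ((x + γ • u) - (xbar + γ • ubar)))
        - lamMin (γ • (1 + γ • Q)⁻¹) * ((u - ubar) ⬝ᵥ (u - ubar)) :=
  stmt_7_general Q q γ α hQ hγ hα x u xbar ubar heq
end

section
/- Let f_i : ℝ^n → ℝ, i = 1,…,N, be differentiable convex functions whose sum F = Σ f_i is convex and differentiable, suppose F attains its minimum, and suppose E ∈ ℝ^{N×K} has ker(Eᵀ) = span{1_N}. If vectors ȳ_1,…,ȳ_N ∈ ℝ^n and ū_1,…,ū_N ∈ ℝ^n satisfy (i) ū_i = ∇f_i(ȳ_i) for all i, (ii) the stacked vector ū satisfies ū = −(E⊗I_n)d̄ for some d̄, and (iii) (Eᵀ⊗I_n)ȳ = 0, then all ȳ_i are equal to a common value ȳ which satisfies Σ_i ∇f_i(ȳ) = 0, i.e., ȳ is a global minimizer of Σ_i f_i. -/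
open Matrix
open scoped Kronecker

/-- Coordinate gradient of `f : ℝ^n → ℝ`. -/
noncomputable def grad {n : ℕ} (f : (Fin n → ℝ) → ℝ) (x : Fin n → ℝ) : Fin n → ℝ :=
  fun j => fderiv ℝ f x (Pi.single j 1)

/-- First-order condition: a differentiable convex function with zero gradient at a point
attains its global minimum there. -/
lemma min_of_grad_zero {n : ℕ} (F : (Fin n → ℝ) → ℝ)
    (hconv : ConvexOn ℝ Set.univ F) (hdiff : Differentiable ℝ F)
    (yb : Fin n → ℝ) (hgrad : fderiv ℝ F yb = 0) :
    ∀ y, F yb ≤ F y := by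
  intro y
  set v : Fin n → ℝ := y - yb with hv
  -- the 1-d restriction
  set g : ℝ → ℝ := fun t => F (yb + t • v) with hg
  have hgc : ConvexOn ℝ Set.univ g := by
    have := hconv.comp_affineMap
      (AffineMap.lineMap (yb : Fin n → ℝ) y : ℝ →ᵃ[ℝ] (Fin n → ℝ))
    have heq : g = F ∘ (AffineMap.lineMap (yb : Fin n → ℝ) y) := by
      funext t
      simp [hg, AffineMap.lineMap_apply, hv, add_comm]
    rw [heq]
    simpa using this
  have hpath : HasDerivAt (fun t : ℝ => yb + t • v) v 0 := by
    simpa using ((hasDerivAt_id (0:ℝ)).smul_const v).const_add yb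
  have hgd : HasDerivAt g ((fderiv ℝ F yb) v) 0 := by
    have := (hdiff (yb + (0:ℝ) • v)).hasFDerivAt.comp_hasDerivAt 0 hpath
    simpa [hg, Function.comp_def] using this
  have h0 : (fderiv ℝ F yb) v = 0 := by rw [hgrad]; simp
  rw [h0] at hgd
  have hle : (0:ℝ) ≤ slope g 0 1 :=
    hgc.le_slope_of_hasDerivAt (Set.mem_univ 0) (Set.mem_univ 1) one_pos hgd
  have : slope g 0 1 = g 1 - g 0 := by simp [slope_def_field]
  have h01 : g 0 ≤ g 1 := by linarith [hle, this ▸ hle]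
  simpa [hg, hv] using h01

/-- Global optimality of steady states: if the equilibria fulfill `ū_i = ∇f_i(ȳ_i)`,
`ū = -(E ⊗ I_n)d̄`, and `(Eᵀ ⊗ I_n)ȳ = 0`, with `ker(Eᵀ) = span{1}`, then all `ȳ_i`
agree on a common value `ȳ` with `Σᵢ∇f_i(ȳ) = 0`, a global minimizer of `Σᵢ f_i`. -/
theorem stmt_11 (N K n : ℕ) (f : Fin N → (Fin n → ℝ) → ℝ)
    (hdiff : ∀ i, Differentiable ℝ (f i))
    (hconv : ∀ i, ConvexOn ℝ Set.univ (f i))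
    (hFconv : ConvexOn ℝ Set.univ (fun x => ∑ i, f i x))
    (hFdiff : Differentiable ℝ (fun x : Fin n → ℝ => ∑ i, f i x))
    (hmin : ∃ ystar : Fin n → ℝ, ∀ y, ∑ i, f i ystar ≤ ∑ i, f i y)
    (E : Matrix (Fin N) (Fin K) ℝ)
    (hker : ∀ x : Fin N → ℝ, Eᵀ.mulVec x = 0 ↔ ∃ α : ℝ, x = fun _ => α)
    (Y U : Fin N → Fin n → ℝ)
    (hU : ∀ i, U i = grad (f i) (Y i))
    (hrange : ∃ dbar : Fin K × Fin n → ℝ,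
      (fun q : Fin N × Fin n => U q.1 q.2) =
        -(E ⊗ₖ (1 : Matrix (Fin n) (Fin n) ℝ)).mulVec dbar)
    (hcons : (Eᵀ ⊗ₖ (1 : Matrix (Fin n) (Fin n) ℝ)).mulVec
        (fun q : Fin N × Fin n => Y q.1 q.2) = 0) :
    ∃ yb : Fin n → ℝ, (∀ i, Y i = yb) ∧ (∑ i, grad (f i) yb) = 0 ∧
      ∀ y, ∑ i, f i yb ≤ ∑ i, f i y := by
  -- columns of E sum to zero
  have hcol : ∀ k, ∑ i, E i k = 0 := by
    intro k
    have h1 : Eᵀ.mulVec (fun _ => (1:ℝ)) = 0 := (hker _).mpr ⟨1, rfl⟩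
    have := congrFun h1 k
    simpa [Matrix.mulVec, dotProduct, Matrix.transpose_apply] using this
  -- sum of gradients is zero at the steady state
  have hUsum : (∑ i, U i) = 0 := by
    obtain ⟨dbar, hd⟩ := hrange
    funext j
    have hU' : ∀ i, U i j = -∑ k, E i k * dbar (k, j) := by
      intro i
      have := congrFun hd (i, j)
      simpa [Matrix.mulVec, dotProduct, Fintype.sum_prod_type,
        Matrix.kroneckerMap_apply, Matrix.one_apply, mul_ite, mul_comm] using this
    calc (∑ i, U i) j = ∑ i, U i j := by simp
      _ = -∑ i, ∑ k, E i k * dbar (k, j) := by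
          simp [hU', Finset.sum_neg_distrib]
      _ = -∑ k, (∑ i, E i k) * dbar (k, j) := by
          rw [Finset.sum_comm]; simp [Finset.sum_mul]
      _ = 0 := by simp [hcol]
  -- all Y i agree
  rcases Nat.eq_zero_or_pos N with hN | hN
  · subst hN
    refine ⟨0, fun i => i.elim0, by simp, fun y => by simp⟩
  · have i0 : Fin N := ⟨0, hN⟩
    have hYconst : ∀ i, Y i = Y i0 := by
      have hcolY : ∀ j, ∃ α : ℝ, (fun i => Y i j) = fun _ => α := by
        intro j
        apply (hker _).mp
        funext m
        have := congrFun hcons (m, j)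
        simpa [Matrix.mulVec, dotProduct, Fintype.sum_prod_type,
          Matrix.kroneckerMap_apply, Matrix.one_apply, mul_ite, mul_comm] using this
      intro i
      funext j
      obtain ⟨α, hα⟩ := hcolY j
      have h1 := congrFun hα i
      have h2 := congrFun hα i0
      rw [h1, h2]
    refine ⟨Y i0, hYconst, ?_, ?_⟩
    · have : (∑ i, grad (f i) (Y i0)) = ∑ i, U i := by
        apply Finset.sum_congr rfl
        intro i _
        rw [hU i, hYconst i]
      rw [this, hUsum]
    · -- zero gradient of the sum
      have hgsum : (∑ i, grad (f i) (Y i0)) = 0 := by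
        have : (∑ i, grad (f i) (Y i0)) = ∑ i, U i := by
          apply Finset.sum_congr rfl
          intro i _
          rw [hU i, hYconst i]
        rw [this, hUsum]
      have hfd : fderiv ℝ (fun x : Fin n → ℝ => ∑ i, f i x) (Y i0) = 0 := by
        have hsum : fderiv ℝ (fun x : Fin n → ℝ => ∑ i, f i x) (Y i0)
            = ∑ i, fderiv ℝ (f i) (Y i0) := by
          exact fderiv_fun_sum (fun i _ => (hdiff i).differentiableAt)
        ext v
        have hv : v = ∑ j, v j • (Pi.single j (1:ℝ) : Fin n → ℝ) := by
          funext k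
          simp [Pi.single_apply, Finset.sum_apply]
        rw [hsum]
        have : (∑ i, fderiv ℝ (f i) (Y i0)) v = ∑ i, fderiv ℝ (f i) (Y i0) v := by
          simp
        rw [this]
        have hcoord : ∀ i, fderiv ℝ (f i) (Y i0) v
            = ∑ j, v j * grad (f i) (Y i0) j := by
          intro i
          conv_lhs => rw [hv]
          rw [map_sum]
          simp [grad, smul_eq_mul]
        simp only [hcoord]
        rw [Finset.sum_comm]
        have := congrFun hgsum
        simp only [Finset.sum_apply, Pi.zero_apply] at this
        simp [← Finset.mul_sum, this]
      exact min_of_grad_zero _ hFconv hFdiff _ hfd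
end
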